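/- Let G be a composite graph formed from disjoint connected subgraphs G_1,...,G_n joined through bridge nodes l_1,...,l_n via a backbone graph B that is a path (line graph) l_1 − l_2 − ... − l_n. Then H_C(G) = (1/(2N)) [ Σ_{i=1}^n 2 n_i H_C(G_i) + Σ_{i=1}^n Σ_{j=i+1}^n (j − i) n_i n_j + Σ_{i=1}^n (N − n_i) C_i(l_i) ]. -/

import Mathlib

open scoped Classical
open Matrix

noncomputable section

/-- The four Moore–Penrose conditions for `B` to be the pseudoinverse of `A`. -/
def IsMoorePenroseInv {α : Type*} [Fintype α] (A B : Matrix α α ℝ) : Prop :=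
  A * B * A = A ∧ B * A * B = B ∧ (A * B)ᵀ = A * B ∧ (B * A)ᵀ = B * A

/-- The Moore–Penrose pseudoinverse of a real square matrix (it exists and is
unique; we extract it by choice). -/
noncomputable def pinv {α : Type*} [Fintype α] (A : Matrix α α ℝ) : Matrix α α ℝ :=
  if h : ∃ B, IsMoorePenroseInv A B then h.choose else 0

/-- The (real) Laplacian matrix of a simple graph. -/
noncomputable def lap {α : Type*} [Fintype α] (H : SimpleGraph α) : Matrix α α ℝ :=
  letI := Classical.decEq α
  letI : DecidableRel H.Adj := Classical.decRel _
  H.lapMatrix ℝ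

/-- The standard basis (indicator) vector `e_u`. -/
noncomputable def evec {α : Type*} [Fintype α] (u : α) : α → ℝ :=
  fun w => if w = u then 1 else 0

/-- Resistance distance `r(u,v) = (e_u - e_v)ᵀ L† (e_u - e_v)`. -/
noncomputable def resistance {α : Type*} [Fintype α] (H : SimpleGraph α) (u v : α) : ℝ :=
  (evec u - evec v) ⬝ᵥ (pinv (lap H)).mulVec (evec u - evec v)

/-- Effective resistance `Ω_H = Σ_{u<v} r(u,v) = (1/2) Σ_{u,v} r(u,v)`. -/
noncomputable def effRes {α : Type*} [Fintype α] (H : SimpleGraph α) : ℝ :=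
  (1 / 2) * ∑ u : α, ∑ v : α, resistance H u v

/-- Network coherence `H_C(H) = Ω_H / (2 |V_H|)`. -/
noncomputable def coherence {α : Type*} [Fintype α] (H : SimpleGraph α) : ℝ :=
  effRes H / (2 * Fintype.card α)

/-- Resistance centrality `C(v) = Σ_{u ≠ v} r(u,v)`. -/
noncomputable def rcentrality {α : Type*} [Fintype α] (H : SimpleGraph α) (v : α) : ℝ :=
  ∑ u ∈ Finset.univ.filter (· ≠ v), resistance H u v

/-- The composite graph built from disjoint subgraphs `G i` with bridge nodes `l i`,
connected according to the backbone graph `B` on the indices. -/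
def composite {n : ℕ} (V : Fin n → Type*) (G : ∀ i, SimpleGraph (V i))
    (l : ∀ i, V i) (B : SimpleGraph (Fin n)) : SimpleGraph (Σ i, V i) where
  Adj x y := (∃ h : x.1 = y.1, (G y.1).Adj (h ▸ x.2) y.2) ∨
    (B.Adj x.1 y.1 ∧ x.2 = l x.1 ∧ y.2 = l y.1)
  symm := ⟨by
    rintro ⟨i, u⟩ ⟨j, v⟩ (⟨h, hadj⟩ | ⟨hB, hu, hv⟩)
    · dsimp only at h
      subst h
      exact Or.inl ⟨rfl, hadj.symm⟩
    · exact Or.inr ⟨hB.symm, hv, hu⟩⟩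
  loopless := ⟨by
    rintro ⟨i, u⟩ (⟨h, hadj⟩ | ⟨hB, _, _⟩)
    · exact (G i).loopless.irrefl _ hadj
    · exact B.loopless.irrefl _ hB⟩

lemma mp_unique {α : Type*} [Fintype α] {A B C : Matrix α α ℝ}
    (hB : IsMoorePenroseInv A B) (hC : IsMoorePenroseInv A C) : B = C := by
  obtain ⟨b1, b2, b3, b4⟩ := hB
  obtain ⟨c1, c2, c3, c4⟩ := hC
  have hAC : A * B = A * C := by
    have h1 : A * B = (A * C) * (A * B) := by
      calc A * B = (A * C * A) * B := by rw [c1]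
      _ = (A * C) * (A * B) := by simp only [Matrix.mul_assoc]
    rw [h1, ← c3, ← b3, ← Matrix.transpose_mul]
    have h2 : (A * B) * (A * C) = A * C := by
      calc (A * B) * (A * C) = (A * B * A) * C := by simp only [Matrix.mul_assoc]
      _ = A * C := by rw [b1]
    rw [h2, c3]
  have hCA : B * A = C * A := by
    have h1 : B * A = (B * A) * (C * A) := by
      calc B * A = B * (A * C * A) := by rw [c1]
      _ = (B * A) * (C * A) := by simp only [Matrix.mul_assoc]
    rw [h1, ← b4, ← c4, ← Matrix.transpose_mul]
    have h2 : (C * A) * (B * A) = C * A := by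
      calc (C * A) * (B * A) = C * (A * B * A) := by simp only [Matrix.mul_assoc]
      _ = C * A := by rw [b1]
    rw [h2, c4]
  calc B = B * A * B := b2.symm
  _ = B * (A * C) := by rw [Matrix.mul_assoc, hAC]
  _ = C * A * C := by rw [← Matrix.mul_assoc, hCA]
  _ = C := c2

lemma pinv_spec {α : Type*} [Fintype α] {A B : Matrix α α ℝ}
    (h : IsMoorePenroseInv A B) : pinv A = B := by
  have hex : ∃ C, IsMoorePenroseInv A C := ⟨B, h⟩
  rw [pinv, dif_pos hex]
  exact mp_unique hex.choose_spec h

section LapFacts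

variable {α : Type*} [Fintype α]

/-- The matrix all whose entries are `1/|α|`. -/
def Jm (α : Type*) [Fintype α] : Matrix α α ℝ := Matrix.of fun _ _ => (Fintype.card α : ℝ)⁻¹

lemma lap_isSymm (H : SimpleGraph α) : (lap H)ᵀ = lap H := by
  unfold lap; exact H.isSymm_lapMatrix ℝ

lemma lap_mulVec (H : SimpleGraph α) (x : α → ℝ) (w : α) :
    (lap H *ᵥ x) w = ∑ z, if H.Adj w z then x w - x z else 0 := by
  classical
  unfold lap
  rw [SimpleGraph.lapMatrix_mulVec_apply]
  rw [← Finset.sum_filter]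
  have hnf : Finset.univ.filter (H.Adj w) = H.neighborFinset w := by
    ext z; simp [SimpleGraph.mem_neighborFinset]
  rw [hnf, Finset.sum_sub_distrib, Finset.sum_const, SimpleGraph.card_neighborFinset_eq_degree]
  push_cast
  ring

lemma lap_mulVec_const (H : SimpleGraph α) : lap H *ᵥ (fun _ => (1:ℝ)) = 0 := by
  classical
  unfold lap
  exact H.lapMatrix_mulVec_const_eq_zero

lemma Jm_mulVec (x : α → ℝ) : Jm α *ᵥ x = fun _ => (Fintype.card α : ℝ)⁻¹ * ∑ z, x z := by
  funext w
  simp [Jm, mulVec, dotProduct, Finset.mul_sum]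

lemma lap_mul_Jm (H : SimpleGraph α) : lap H * Jm α = 0 := by
  ext w z
  have h := congrFun (lap_mulVec_const H) w
  simp only [mulVec, dotProduct, mul_one, Pi.zero_apply] at h
  simp [Matrix.mul_apply, Jm, ← Finset.sum_mul, h]

lemma Jm_mul_lap (H : SimpleGraph α) : Jm α * lap H = 0 := by
  have : (lap H * Jm α)ᵀ = 0 := by rw [lap_mul_Jm]; simp
  rw [Matrix.transpose_mul, lap_isSymm] at this
  have hJ : (Jm α)ᵀ = Jm α := rfl
  rwa [hJ] at this

lemma Jm_mul_Jm [Nonempty α] : Jm α * Jm α = Jm α := by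
  have hc : (Fintype.card α : ℝ) ≠ 0 := by
    exact_mod_cast Fintype.card_ne_zero
  ext w z
  simp only [Matrix.mul_apply, Jm, Matrix.of_apply, Finset.sum_const, Finset.card_univ,
    nsmul_eq_mul]
  rw [← mul_assoc, mul_inv_cancel₀ hc, one_mul]

end LapFacts

section Connected

variable {α : Type*} [Fintype α]

lemma dot_lap_nonneg (H : SimpleGraph α) (x : α → ℝ) : 0 ≤ x ⬝ᵥ (lap H *ᵥ x) := by
  classical
  unfold lap
  have h := (H.posSemidef_lapMatrix ℝ).dotProduct_mulVec_nonneg x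
  simpa using h

lemma dot_lap_eq_zero_iff (H : SimpleGraph α) (x : α → ℝ) :
    x ⬝ᵥ (lap H *ᵥ x) = 0 ↔ ∀ i j, H.Reachable i j → x i = x j := by
  classical
  unfold lap
  rw [← Matrix.toLinearMap₂'_apply']
  exact H.lapMatrix_toLinearMap₂'_apply'_eq_zero_iff_forall_reachable x

lemma dot_Jm (x : α → ℝ) : x ⬝ᵥ (Jm α *ᵥ x) = (Fintype.card α : ℝ)⁻¹ * (∑ z, x z)^2 := by
  rw [Jm_mulVec]
  simp only [dotProduct]
  rw [← Finset.sum_mul]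
  ring

lemma det_lap_add_Jm_ne_zero {H : SimpleGraph α} (hc : H.Connected) :
    (lap H + Jm α).det ≠ 0 := by
  classical
  have hcard : (Fintype.card α : ℝ) ≠ 0 := by
    have : Nonempty α := hc.nonempty
    exact_mod_cast Fintype.card_ne_zero
  intro hdet
  obtain ⟨v, hv0, hv⟩ := (Matrix.exists_mulVec_eq_zero_iff).2 hdet
  have h0 : v ⬝ᵥ ((lap H + Jm α) *ᵥ v) = 0 := by rw [hv]; simp
  rw [Matrix.add_mulVec, dotProduct_add] at h0
  have hL0 : 0 ≤ v ⬝ᵥ (lap H *ᵥ v) := dot_lap_nonneg H v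
  have hJ0 : 0 ≤ v ⬝ᵥ (Jm α *ᵥ v) := by
    rw [dot_Jm]; positivity
  have hLz : v ⬝ᵥ (lap H *ᵥ v) = 0 := by linarith
  have hJz : v ⬝ᵥ (Jm α *ᵥ v) = 0 := by linarith
  have hconst : ∀ i j, v i = v j := fun i j =>
    ((dot_lap_eq_zero_iff H v).1 hLz) i j (hc.preconnected i j)
  have hsum : ∑ z, v z = 0 := by
    rw [dot_Jm] at hJz
    have := mul_eq_zero.1 hJz
    rcases this with h | h
    · exact absurd h (by simpa using hcard)
    · exact pow_eq_zero_iff (n := 2) (by norm_num) |>.1 h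
  apply hv0
  have : Nonempty α := hc.nonempty
  obtain ⟨i0⟩ := this
  have hvi0 : v i0 = 0 := by
    have : ∑ z, v z = (Fintype.card α : ℝ) * v i0 := by
      rw [Finset.sum_congr rfl (fun z _ => hconst z i0)]
      simp [Finset.card_univ, mul_comm]
    rw [this] at hsum
    exact (mul_eq_zero.1 hsum).resolve_left hcard
  funext i
  rw [hconst i i0, hvi0]; rfl

/-- Explicit formula for the Moore–Penrose pseudoinverse of the Laplacian of a
connected graph. -/
def gpinv (H : SimpleGraph α) : Matrix α α ℝ := (lap H + Jm α)⁻¹ - Jm α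

variable {H : SimpleGraph α}

lemma lapJ_mul_inv (hc : H.Connected) : (lap H + Jm α) * (lap H + Jm α)⁻¹ = 1 :=
  Matrix.mul_nonsing_inv _ (isUnit_iff_ne_zero.2 (det_lap_add_Jm_ne_zero hc))

lemma inv_mul_lapJ (hc : H.Connected) : (lap H + Jm α)⁻¹ * (lap H + Jm α) = 1 :=
  Matrix.nonsing_inv_mul _ (isUnit_iff_ne_zero.2 (det_lap_add_Jm_ne_zero hc))

lemma Jm_mul_inv (hc : H.Connected) : Jm α * (lap H + Jm α)⁻¹ = Jm α := by
  have : Nonempty α := hc.nonempty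
  have h1 : Jm α * (lap H + Jm α) = Jm α := by
    rw [Matrix.mul_add, Jm_mul_lap, Jm_mul_Jm, zero_add]
  calc Jm α * (lap H + Jm α)⁻¹ = (Jm α * (lap H + Jm α)) * (lap H + Jm α)⁻¹ := by rw [h1]
  _ = Jm α * ((lap H + Jm α) * (lap H + Jm α)⁻¹) := by rw [Matrix.mul_assoc]
  _ = Jm α := by rw [lapJ_mul_inv hc, Matrix.mul_one]

lemma inv_mul_Jm (hc : H.Connected) : (lap H + Jm α)⁻¹ * Jm α = Jm α := by
  have : Nonempty α := hc.nonempty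
  have h1 : (lap H + Jm α) * Jm α = Jm α := by
    rw [Matrix.add_mul, lap_mul_Jm, Jm_mul_Jm, zero_add]
  calc (lap H + Jm α)⁻¹ * Jm α = (lap H + Jm α)⁻¹ * ((lap H + Jm α) * Jm α) := by rw [h1]
  _ = ((lap H + Jm α)⁻¹ * (lap H + Jm α)) * Jm α := by rw [Matrix.mul_assoc]
  _ = Jm α := by rw [inv_mul_lapJ hc, Matrix.one_mul]

lemma lap_mul_gpinv (hc : H.Connected) : lap H * gpinv H = 1 - Jm α := by
  rw [gpinv, Matrix.mul_sub, lap_mul_Jm, sub_zero]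
  have : lap H * (lap H + Jm α)⁻¹ =
      (lap H + Jm α) * (lap H + Jm α)⁻¹ - Jm α * (lap H + Jm α)⁻¹ := by
    rw [← Matrix.sub_mul, add_sub_cancel_right]
  rw [this, lapJ_mul_inv hc, Jm_mul_inv hc]

lemma gpinv_mul_lap (hc : H.Connected) : gpinv H * lap H = 1 - Jm α := by
  rw [gpinv, Matrix.sub_mul, Jm_mul_lap, sub_zero]
  have : (lap H + Jm α)⁻¹ * lap H =
      (lap H + Jm α)⁻¹ * (lap H + Jm α) - (lap H + Jm α)⁻¹ * Jm α := by
    rw [← Matrix.mul_sub, add_sub_cancel_right]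
  rw [this, inv_mul_lapJ hc, inv_mul_Jm hc]

lemma Jm_transpose : (Jm α)ᵀ = Jm α := rfl

lemma gpinv_isMP (hc : H.Connected) : IsMoorePenroseInv (lap H) (gpinv H) := by
  have : Nonempty α := hc.nonempty
  have hJg : Jm α * gpinv H = 0 := by
    rw [gpinv, Matrix.mul_sub, Jm_mul_inv hc, Jm_mul_Jm, sub_self]
  have hgJ : gpinv H * Jm α = 0 := by
    rw [gpinv, Matrix.sub_mul, inv_mul_Jm hc, Jm_mul_Jm, sub_self]
  refine ⟨?_, ?_, ?_, ?_⟩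
  · rw [lap_mul_gpinv hc, Matrix.sub_mul, Matrix.one_mul, Jm_mul_lap, sub_zero]
  · rw [Matrix.mul_assoc, lap_mul_gpinv hc, Matrix.mul_sub, Matrix.mul_one, hgJ, sub_zero]
  · rw [lap_mul_gpinv hc, Matrix.transpose_sub, Matrix.transpose_one, Jm_transpose]
  · rw [gpinv_mul_lap hc, Matrix.transpose_sub, Matrix.transpose_one, Jm_transpose]

lemma pinv_lap (hc : H.Connected) : pinv (lap H) = gpinv H :=
  pinv_spec (gpinv_isMP hc)

lemma sum_evec (u : α) : ∑ z, evec u z = 1 := by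
  simp [evec]

lemma sum_evec_sub (u v : α) : ∑ z, (evec u - evec v) z = 0 := by
  simp only [Pi.sub_apply, Finset.sum_sub_distrib, sum_evec, sub_self]

lemma evec_sub_dot (u v : α) (y : α → ℝ) : (evec u - evec v) ⬝ᵥ y = y u - y v := by
  simp only [dotProduct, Pi.sub_apply, sub_mul, Finset.sum_sub_distrib, evec]
  congr 1 <;> simp [Finset.sum_ite_eq']

/-- If `x` is any potential with `L x = e_u - e_v` on a connected graph, then the
resistance distance equals `x u - x v`. -/
lemma resistance_eq (hc : H.Connected) {x : α → ℝ} {u v : α}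
    (hx : lap H *ᵥ x = evec u - evec v) :
    resistance H u v = x u - x v := by
  rw [resistance, pinv_lap hc, ← hx, Matrix.mulVec_mulVec, gpinv_mul_lap hc,
    Matrix.sub_mulVec, Matrix.one_mulVec, hx]
  rw [dotProduct_sub, evec_sub_dot, evec_sub_dot, Jm_mulVec]
  ring

/-- The canonical potential solving `L x = e_u - e_v`. -/
def pot (H : SimpleGraph α) (u v : α) : α → ℝ := gpinv H *ᵥ (evec u - evec v)

lemma lap_pot (hc : H.Connected) (u v : α) :
    lap H *ᵥ pot H u v = evec u - evec v := by
  rw [pot, Matrix.mulVec_mulVec, lap_mul_gpinv hc, Matrix.sub_mulVec, Matrix.one_mulVec,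
    Jm_mulVec, sum_evec_sub]
  funext w
  simp

lemma resistance_eq_pot (hc : H.Connected) (u v : α) :
    resistance H u v = pot H u v u - pot H u v v :=
  resistance_eq hc (lap_pot hc u v)

lemma resistance_self (H : SimpleGraph α) (v : α) : resistance H v v = 0 := by
  simp [resistance]

lemma resistance_comm (H : SimpleGraph α) (u v : α) :
    resistance H u v = resistance H v u := by
  rw [resistance, resistance]
  have h : evec (α := α) u - evec v = -(evec v - evec u) := by ring
  rw [h, Matrix.mulVec_neg, dotProduct_neg, neg_dotProduct, neg_neg]

end Connected

section PathGraph

variable {n : ℕ}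

lemma sum_fin_val (c : ℕ) (g : Fin n → ℝ) :
    (∑ m : Fin n, if c = (m : ℕ) then g m else 0) = if h : c < n then g ⟨c, h⟩ else 0 := by
  by_cases h : c < n
  · rw [dif_pos h, Finset.sum_eq_single ⟨c, h⟩]
    · rw [if_pos rfl]
    · intro m _ hm
      rw [if_neg]
      intro hc
      exact hm (Fin.ext hc.symm)
    · intro hmem; exact absurd (Finset.mem_univ _) hmem
  · rw [dif_neg h]
    apply Finset.sum_eq_zero
    intro m _
    rw [if_neg]
    intro hc
    exact h (hc ▸ m.isLt)

lemma pathLap (x : Fin n → ℝ) (k : Fin n) :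
    (lap (SimpleGraph.pathGraph n) *ᵥ x) k =
      (if h : (k : ℕ) + 1 < n then x k - x ⟨(k : ℕ) + 1, h⟩ else 0) +
      (if h : (k : ℕ) ≠ 0 then x k - x ⟨(k : ℕ) - 1, by omega⟩ else 0) := by
  rw [lap_mulVec]
  have hadj : ∀ m : Fin n, (SimpleGraph.pathGraph n).Adj k m ↔
      ((k : ℕ) + 1 = (m : ℕ) ∨ (m : ℕ) + 1 = (k : ℕ)) := by
    intro m; rw [SimpleGraph.pathGraph_adj]
  have hsplit : ∀ m : Fin n,
      (if (SimpleGraph.pathGraph n).Adj k m then x k - x m else 0) =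
        (if (k : ℕ) + 1 = (m : ℕ) then x k - x m else 0) +
        (if ((k : ℕ) - 1 : ℕ) = (m : ℕ) ∧ (k : ℕ) ≠ 0 then x k - x m else 0) := by
    intro m
    rw [hadj]
    by_cases h1 : (k : ℕ) + 1 = (m : ℕ) <;> by_cases h2 : (m : ℕ) + 1 = (k : ℕ)
    · omega
    · rw [if_pos (Or.inl h1), if_pos h1, if_neg (by omega)]; ring
    · rw [if_pos (Or.inr h2), if_neg h1, if_pos (by omega)]; ring
    · rw [if_neg (by tauto), if_neg h1, if_neg (by omega)]; ring
  simp_rw [hsplit, Finset.sum_add_distrib]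
  congr 1
  · rw [sum_fin_val ((k : ℕ) + 1) (fun m => x k - x m)]
  · by_cases hk : (k : ℕ) = 0
    · rw [dif_neg (by omega)]
      apply Finset.sum_eq_zero
      intro m _
      rw [if_neg (by omega)]
    · have : ∀ m : Fin n, (((k : ℕ) - 1 : ℕ) = (m : ℕ) ∧ (k : ℕ) ≠ 0) ↔ ((k : ℕ) - 1 = (m : ℕ)) := by
        intro m; constructor
        · exact fun h => h.1
        · exact fun h => ⟨h, hk⟩
      simp_rw [this]
      rw [sum_fin_val ((k : ℕ) - 1) (fun m => x k - x m), dif_pos (by omega : (k : ℕ) - 1 < n),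
        dif_pos hk]

/-- The unit-step potential on the path graph. -/
def stepPot (t : ℕ) : Fin n → ℝ := fun k => if (k : ℕ) ≤ t then 1 else 0

lemma lap_stepPot (t : ℕ) (ht : t + 1 < n) :
    lap (SimpleGraph.pathGraph n) *ᵥ stepPot t =
      evec (⟨t, by omega⟩ : Fin n) - evec ⟨t + 1, ht⟩ := by
  funext k
  rw [pathLap]
  simp only [stepPot, Pi.sub_apply, evec, Fin.ext_iff]
  split_ifs <;> simp_all <;> omega

lemma telescope {M : Type*} [AddCommGroup M] (F : ℕ → M) {a b : ℕ} (h : a ≤ b) :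
    ∑ t ∈ Finset.Ico a b, (F t - F (t + 1)) = F a - F b := by
  induction b, h using Nat.le_induction with
  | base => simp
  | succ b hab ih => rw [Finset.sum_Ico_succ_top hab, ih]; abel

/-- The potential on the path graph realising unit current flow from `i` to `j`. -/
def pathPot (i j : Fin n) : Fin n → ℝ := fun k => ∑ t ∈ Finset.Ico (i : ℕ) (j : ℕ), stepPot t k

lemma lap_pathPot {i j : Fin n} (hij : i < j) :
    lap (SimpleGraph.pathGraph n) *ᵥ pathPot i j = evec i - evec j := by
  have hP : pathPot i j = ∑ t ∈ Finset.Ico (i : ℕ) (j : ℕ), stepPot t := by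
    funext k
    rw [Finset.sum_apply]
    rfl
  set F : ℕ → (Fin n → ℝ) := fun t => if h : t < n then evec ⟨t, h⟩ else 0 with hF
  have hij' : (i : ℕ) < (j : ℕ) := hij
  have hjn : (j : ℕ) < n := j.isLt
  have hsum : lap (SimpleGraph.pathGraph n) *ᵥ pathPot i j
      = ∑ t ∈ Finset.Ico (i : ℕ) (j : ℕ), (F t - F (t + 1)) := by
    rw [hP, ← Matrix.mulVecLin_apply, map_sum]
    apply Finset.sum_congr rfl
    intro t ht
    rw [Finset.mem_Ico] at ht
    have ht1 : t + 1 < n := by omega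
    rw [Matrix.mulVecLin_apply, lap_stepPot t ht1, hF]
    simp only
    rw [dif_pos (by omega : t < n), dif_pos ht1]
  rw [hsum, telescope F (le_of_lt hij'), hF]
  simp only
  rw [dif_pos (by omega : (i : ℕ) < n), dif_pos (by omega : (j : ℕ) < n)]

lemma pathPot_apply_left {i j : Fin n} (hij : i < j) :
    pathPot i j i = ((j : ℕ) - (i : ℕ) : ℕ) := by
  rw [pathPot]
  have : ∀ t ∈ Finset.Ico (i : ℕ) (j : ℕ), stepPot t i = 1 := by
    intro t ht
    rw [Finset.mem_Ico] at ht
    rw [stepPot, if_pos ht.1]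
  rw [Finset.sum_congr rfl this, Finset.sum_const, Nat.card_Ico]
  simp

lemma pathPot_apply_right {i j : Fin n} (hij : i < j) :
    pathPot i j j = 0 := by
  rw [pathPot]
  apply Finset.sum_eq_zero
  intro t ht
  rw [Finset.mem_Ico] at ht
  rw [stepPot, if_neg (by omega)]

end PathGraph

section Composite

variable {n : ℕ} {V : Fin n → Type*} [∀ i, Fintype (V i)]
  {G : ∀ i, SimpleGraph (V i)} {l : ∀ i, V i} {B : SimpleGraph (Fin n)}

lemma composite_adj_same {i : Fin n} {u v : V i} :
    (composite V G l B).Adj ⟨i, u⟩ ⟨i, v⟩ ↔ (G i).Adj u v := by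
  constructor
  · rintro (⟨h, ha⟩ | ⟨hB, -, -⟩)
    · exact ha
    · exact absurd hB (B.loopless.irrefl i)
  · intro h; exact Or.inl ⟨rfl, h⟩

lemma composite_adj_ne {i j : Fin n} (hij : i ≠ j) {u : V i} {v : V j} :
    (composite V G l B).Adj ⟨i, u⟩ ⟨j, v⟩ ↔ (B.Adj i j ∧ u = l i ∧ v = l j) := by
  constructor
  · rintro (⟨h, ha⟩ | h)
    · exact absurd h hij
    · exact h
  · intro h; exact Or.inr h

/-- Extend a potential on `V i` to the whole composite graph, constantly `y (l i)`
outside of `V i`. -/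
def extend (G : ∀ i, SimpleGraph (V i)) (l : ∀ i, V i) (i : Fin n) (y : V i → ℝ) :
    (Σ j, V j) → ℝ :=
  fun p => if h : p.1 = i then y (h ▸ p.2) else y (l i)

lemma extend_same {i : Fin n} (y : V i → ℝ) (u : V i) :
    extend G l i y ⟨i, u⟩ = y u := dif_pos rfl

lemma extend_ne {i k : Fin n} (hk : k ≠ i) (y : V i → ℝ) (w : V k) :
    extend G l i y ⟨k, w⟩ = y (l i) := dif_neg hk

/-- Extend a potential on the index set (constant on each part). -/
def extendP (q : Fin n → ℝ) : (Σ j, V j) → ℝ := fun p => q p.1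

lemma sum_sigma_univ (f : (Σ i, V i) → ℝ) :
    ∑ p : Σ i, V i, f p = ∑ i, ∑ v : V i, f ⟨i, v⟩ := by
  rw [← Finset.univ_sigma_univ, Finset.sum_sigma]

lemma lap_mulVec_extend (i : Fin n) (y : V i → ℝ) (p : Σ j, V j) :
    (lap (composite V G l B) *ᵥ extend G l i y) p =
      if h : p.1 = i then (lap (G i) *ᵥ y) (h ▸ p.2) else 0 := by
  obtain ⟨k, w⟩ := p
  rw [lap_mulVec, sum_sigma_univ]
  by_cases hk : k = i
  · subst hk
    rw [dif_pos rfl, lap_mulVec]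
    rw [Finset.sum_eq_single k]
    · apply Finset.sum_congr rfl
      intro z _
      rw [composite_adj_same, extend_same, extend_same]
    · intro m _ hm
      apply Finset.sum_eq_zero
      intro z _
      rw [extend_same]
      by_cases hadj : (composite V G l B).Adj ⟨k, w⟩ ⟨m, z⟩
      · rw [if_pos hadj]
        obtain ⟨-, hw, hz⟩ := (composite_adj_ne (Ne.symm hm)).1 hadj
        by_cases hmk : m = k
        · exact absurd hmk hm
        · rw [extend_ne hm y z, hw, sub_self]
      · rw [if_neg hadj]
    · intro h; exact absurd (Finset.mem_univ _) h
  · rw [dif_neg hk]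
    apply Finset.sum_eq_zero
    intro m _
    apply Finset.sum_eq_zero
    intro z _
    rw [extend_ne hk y w]
    by_cases hadj : (composite V G l B).Adj ⟨k, w⟩ ⟨m, z⟩
    · rw [if_pos hadj]
      by_cases hm : m = k
      · subst hm
        rw [extend_ne hk y z, sub_self]
      · obtain ⟨-, -, hz⟩ := (composite_adj_ne (Ne.symm hm)).1 hadj
        by_cases hmi : m = i
        · subst hmi
          rw [extend_same, hz, sub_self]
        · rw [extend_ne (fun h => hmi h) y z, sub_self]
    · rw [if_neg hadj]

lemma lap_mulVec_extendP (q : Fin n → ℝ) (p : Σ j, V j) :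
    (lap (composite V G l B) *ᵥ extendP q) p =
      if p.2 = l p.1 then (lap B *ᵥ q) p.1 else 0 := by
  obtain ⟨k, w⟩ := p
  rw [lap_mulVec, sum_sigma_univ]
  by_cases hw : w = l k
  · rw [if_pos hw, lap_mulVec]
    apply Finset.sum_congr rfl
    intro m _
    by_cases hm : m = k
    · subst hm
      rw [if_neg (B.loopless.irrefl m)]
      apply Finset.sum_eq_zero
      intro z _
      by_cases hadj : (composite V G l B).Adj ⟨m, w⟩ ⟨m, z⟩
      · rw [if_pos hadj]
        show q m - q m = 0
        exact sub_self _
      · rw [if_neg hadj]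
    · rw [Finset.sum_eq_single (l m)]
      · by_cases hB : B.Adj k m
        · rw [if_pos ((composite_adj_ne (Ne.symm hm)).2 ⟨hB, hw, rfl⟩), if_pos hB]
          rfl
        · rw [if_neg, if_neg hB]
          intro hadj
          exact hB ((composite_adj_ne (Ne.symm hm)).1 hadj).1
      · intro z _ hz
        rw [if_neg]
        intro hadj
        exact hz ((composite_adj_ne (Ne.symm hm)).1 hadj).2.2
      · intro h; exact absurd (Finset.mem_univ _) h
  · rw [if_neg hw]
    apply Finset.sum_eq_zero
    intro m _
    apply Finset.sum_eq_zero
    intro z _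
    by_cases hm : m = k
    · subst hm
      by_cases hadj : (composite V G l B).Adj ⟨m, w⟩ ⟨m, z⟩
      · rw [if_pos hadj]
        show q m - q m = 0
        exact sub_self _
      · rw [if_neg hadj]
    · rw [if_neg]
      intro hadj
      exact hw ((composite_adj_ne (Ne.symm hm)).1 hadj).2.1

lemma evec_sigma_same {i : Fin n} (a : V i) (w : V i) :
    evec (α := Σ j, V j) ⟨i, a⟩ ⟨i, w⟩ = evec a w := by
  simp only [evec, Sigma.mk.inj_iff, heq_eq_eq, true_and]

lemma evec_sigma_ne {i k : Fin n} (hk : k ≠ i) (a : V i) (w : V k) :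
    evec (α := Σ j, V j) ⟨i, a⟩ ⟨k, w⟩ = 0 := by
  simp only [evec, Sigma.mk.inj_iff]
  rw [if_neg]
  intro h
  exact hk h.1

lemma lap_extend_eq {i : Fin n} {y : V i → ℝ} {a b : V i}
    (hy : lap (G i) *ᵥ y = evec a - evec b) :
    lap (composite V G l B) *ᵥ extend G l i y =
      evec (⟨i, a⟩ : Σ j, V j) - evec ⟨i, b⟩ := by
  funext p
  rw [lap_mulVec_extend]
  obtain ⟨k, w⟩ := p
  by_cases hk : k = i
  · subst hk
    rw [dif_pos rfl, hy]
    show evec a w - evec b w = _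
    rw [Pi.sub_apply, evec_sigma_same, evec_sigma_same]
  · rw [dif_neg hk, Pi.sub_apply, evec_sigma_ne hk, evec_sigma_ne hk, sub_self]

lemma lap_extendP_eq {i j : Fin n} (hij : i ≠ j) {q : Fin n → ℝ}
    (hq : lap B *ᵥ q = evec i - evec j) :
    lap (composite V G l B) *ᵥ extendP q =
      evec (⟨i, l i⟩ : Σ m, V m) - evec ⟨j, l j⟩ := by
  funext p
  rw [lap_mulVec_extendP]
  obtain ⟨k, w⟩ := p
  by_cases hw : w = l k
  · subst hw
    rw [if_pos rfl, hq, Pi.sub_apply, Pi.sub_apply]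
    congr 1
    · by_cases hk : k = i
      · subst hk
        rw [evec, if_pos rfl, evec_sigma_same, evec, if_pos rfl]
      · rw [evec, if_neg hk, evec_sigma_ne hk]
    · by_cases hk : k = j
      · subst hk
        rw [evec, if_pos rfl, evec_sigma_same, evec, if_pos rfl]
      · rw [evec, if_neg hk, evec_sigma_ne hk]
  · rw [if_neg hw, Pi.sub_apply]
    have key : ∀ (m : Fin n), evec (α := Σ m', V m') ⟨m, l m⟩ ⟨k, w⟩ = 0 := by
      intro m
      rw [evec, if_neg]
      intro h
      obtain ⟨h1, h2⟩ := Sigma.mk.inj_iff.1 h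
      subst h1
      exact hw (eq_of_heq h2)
    rw [key i, key j, sub_self]

/-- Inclusion of a part into the composite graph, as a graph homomorphism. -/
def incHom (G : ∀ i, SimpleGraph (V i)) (l : ∀ i, V i) (B : SimpleGraph (Fin n)) (i : Fin n) :
    G i →g composite V G l B where
  toFun u := ⟨i, u⟩
  map_rel' h := Or.inl ⟨rfl, h⟩

/-- The backbone, mapped into the composite graph. -/
def bbHom (G : ∀ i, SimpleGraph (V i)) (l : ∀ i, V i) (B : SimpleGraph (Fin n)) :
    B →g composite V G l B where
  toFun k := ⟨k, l k⟩
  map_rel' h := Or.inr ⟨h, rfl, rfl⟩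

lemma composite_connected (hG : ∀ i, (G i).Connected) (hB : B.Connected) :
    (composite V G l B).Connected := by
  have hne : Nonempty (Σ m, V m) := by
    obtain ⟨i⟩ := hB.nonempty
    obtain ⟨u⟩ := (hG i).nonempty
    exact ⟨⟨i, u⟩⟩
  refine ⟨?_⟩
  rintro ⟨i, u⟩ ⟨j, v⟩
  have h1 : (composite V G l B).Reachable ⟨i, u⟩ ⟨i, l i⟩ :=
    ((hG i).preconnected u (l i)).map (incHom G l B i)
  have h2 : (composite V G l B).Reachable ⟨i, l i⟩ ⟨j, l j⟩ :=
    (hB.preconnected i j).map (bbHom G l B)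
  have h3 : (composite V G l B).Reachable ⟨j, l j⟩ ⟨j, v⟩ :=
    ((hG j).preconnected (l j) v).map (incHom G l B j)
  exact (h1.trans h2).trans h3

lemma resistance_composite_same (hG : ∀ i, (G i).Connected) (hB : B.Connected)
    (i : Fin n) (u v : V i) :
    resistance (composite V G l B) ⟨i, u⟩ ⟨i, v⟩ = resistance (G i) u v := by
  have hc := composite_connected (l := l) hG hB
  have hx := lap_extend_eq (G := G) (l := l) (B := B) (lap_pot (hG i) u v)
  rw [resistance_eq hc hx, extend_same, extend_same, resistance_eq_pot (hG i)]

lemma resistance_composite_cross (hG : ∀ i, (G i).Connected) (hB : B.Connected)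
    {i j : Fin n} (hij : i ≠ j) {q : Fin n → ℝ} (hq : lap B *ᵥ q = evec i - evec j)
    (u : V i) (v : V j) :
    resistance (composite V G l B) ⟨i, u⟩ ⟨j, v⟩ =
      resistance (G i) u (l i) + (q i - q j) + resistance (G j) (l j) v := by
  have hc := composite_connected (l := l) hG hB
  set X : (Σ m, V m) → ℝ := extend G l i (pot (G i) u (l i)) + extendP q +
    extend G l j (pot (G j) (l j) v) with hXdef
  have hX : lap (composite V G l B) *ᵥ X = evec ⟨i, u⟩ - evec ⟨j, v⟩ := by
    rw [hXdef, Matrix.mulVec_add, Matrix.mulVec_add,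
      lap_extend_eq (G := G) (l := l) (B := B) (lap_pot (hG i) u (l i)),
      lap_extendP_eq hij hq,
      lap_extend_eq (G := G) (l := l) (B := B) (lap_pot (hG j) (l j) v)]
    funext p
    simp only [Pi.add_apply, Pi.sub_apply]
    ring
  rw [resistance_eq hc hX, hXdef]
  simp only [Pi.add_apply]
  rw [extend_same, extend_same, extend_ne hij (pot (G j) (l j) v) u,
    extend_ne (Ne.symm hij) (pot (G i) u (l i)) v]
  show pot (G i) u (l i) u + q i + pot (G j) (l j) v (l j)
      - (pot (G i) u (l i) (l i) + q j + pot (G j) (l j) v v) = _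
  have h1 := resistance_eq_pot (hG i) u (l i)
  have h2 := resistance_eq_pot (hG j) (l j) v
  linarith

end Composite

section Final

lemma sum_resistance_eq_rcentrality {α : Type*} [Fintype α] (H : SimpleGraph α) (w : α) :
    ∑ u, resistance H u w = rcentrality H w := by
  classical
  rw [rcentrality, ← Finset.sum_filter_add_sum_filter_not Finset.univ (· ≠ w)
    (fun u => resistance H u w)]
  have h2 : Finset.univ.filter (fun u => ¬ u ≠ w) = {w} := by
    ext a; simp
  rw [h2, Finset.sum_singleton, resistance_self, add_zero]

lemma fin_sum_split {n : ℕ} (i : Fin n) (g : Fin n → ℝ) :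
    ∑ j, g j = ∑ j ∈ Finset.Iio i, g j + g i + ∑ j ∈ Finset.Ioi i, g j := by
  have h1 : (Finset.univ : Finset (Fin n)) = insert i (Finset.Iio i ∪ Finset.Ioi i) := by
    ext j
    simp only [Finset.mem_univ, Finset.mem_insert, Finset.mem_union, Finset.mem_Iio,
      Finset.mem_Ioi, true_iff]
    rcases lt_trichotomy j i with h | h | h
    · exact Or.inr (Or.inl h)
    · exact Or.inl h
    · exact Or.inr (Or.inr h)
  have h2 : Disjoint (Finset.Iio i) (Finset.Ioi i) := by
    rw [Finset.disjoint_left]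
    intro a ha hb
    simp only [Finset.mem_Iio] at ha
    simp only [Finset.mem_Ioi] at hb
    exact absurd (ha.trans hb) (lt_irrefl _)
  have h3 : i ∉ Finset.Iio i ∪ Finset.Ioi i := by simp
  rw [h1, Finset.sum_insert h3, Finset.sum_union h2]
  ring

lemma fin_sum_Iio_comm {n : ℕ} (f : Fin n → Fin n → ℝ) :
    ∑ i, ∑ j ∈ Finset.Iio i, f i j = ∑ j, ∑ i ∈ Finset.Ioi j, f i j := by
  rw [Finset.sum_sigma', Finset.sum_sigma']
  apply Finset.sum_nbij' (fun p => ⟨p.2, p.1⟩) (fun p => ⟨p.2, p.1⟩) <;>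
    simp [Finset.mem_Iio, Finset.mem_Ioi]

end Final

/-- Coherence of a composite graph whose backbone graph is the
path (line graph) `l_1 - l_2 - ⋯ - l_n`. -/
theorem coherence_composite_path_backbone
    {n : ℕ} (hn : 2 ≤ n)
    (V : Fin n → Type*) [∀ i, Fintype (V i)]
    (G : ∀ i, SimpleGraph (V i)) (l : ∀ i, V i)
    (hG : ∀ i, (G i).Connected) :
    coherence (composite V G l (SimpleGraph.pathGraph n)) =
      (1 / (2 * (Fintype.card (Σ i, V i) : ℝ))) *
        ((∑ i, 2 * (Fintype.card (V i) : ℝ) * coherence (G i)) +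
         (∑ i : Fin n, ∑ j ∈ Finset.Ioi i,
            ((j.val - i.val : ℕ) : ℝ) *
              (Fintype.card (V i) : ℝ) * (Fintype.card (V j) : ℝ)) +
         (∑ i, ((Fintype.card (Σ i, V i) : ℝ) - (Fintype.card (V i) : ℝ)) *
            rcentrality (G i) (l i))) := by
  classical
  have hBc : (SimpleGraph.pathGraph n).Connected := by
    obtain ⟨m, rfl⟩ : ∃ m, n = m + 1 := ⟨n - 1, by omega⟩
    exact SimpleGraph.pathGraph_connected m
  have hmpos : ∀ i, (0:ℝ) < (Fintype.card (V i) : ℝ) := fun i => by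
    have := (hG i).nonempty
    exact_mod_cast Fintype.card_pos
  have hNsum : ((Fintype.card (Σ i, V i) : ℝ)) = ∑ i, (Fintype.card (V i) : ℝ) := by
    rw [Fintype.card_sigma]
    push_cast
    rfl
  have hNpos : (0:ℝ) < (Fintype.card (Σ i, V i) : ℝ) := by
    rw [hNsum]
    apply Finset.sum_pos (fun i _ => hmpos i)
    have : Nonempty (Fin n) := ⟨⟨0, by omega⟩⟩
    exact Finset.univ_nonempty
  -- diagonal blocks
  have hdiag : ∀ i : Fin n,
      (∑ u : V i, ∑ v : V i, resistance (composite V G l (SimpleGraph.pathGraph n)) ⟨i, u⟩ ⟨i, v⟩)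
        = 4 * (Fintype.card (V i) : ℝ) * coherence (G i) := by
    intro i
    have h1 : (∑ u : V i, ∑ v : V i,
        resistance (composite V G l (SimpleGraph.pathGraph n)) ⟨i, u⟩ ⟨i, v⟩)
        = ∑ u : V i, ∑ v : V i, resistance (G i) u v := by
      apply Finset.sum_congr rfl; intro u _
      apply Finset.sum_congr rfl; intro v _
      exact resistance_composite_same hG hBc i u v
    rw [h1]
    have h2 : effRes (G i) = (1/2) * ∑ u : V i, ∑ v : V i, resistance (G i) u v := rfl
    have h3 : coherence (G i) = effRes (G i) / (2 * Fintype.card (V i)) := rfl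
    have hcne : (Fintype.card (V i) : ℝ) ≠ 0 := ne_of_gt (hmpos i)
    rw [h3, h2]
    field_simp
    ring
  -- cross blocks
  have hcrossr : ∀ i j : Fin n, i < j → ∀ (u : V i) (v : V j),
      resistance (composite V G l (SimpleGraph.pathGraph n)) ⟨i, u⟩ ⟨j, v⟩ =
        resistance (G i) u (l i) + (((j:ℕ) - (i:ℕ) : ℕ) : ℝ) + resistance (G j) (l j) v := by
    intro i j hij u v
    rw [resistance_composite_cross hG hBc (ne_of_lt hij) (lap_pathPot hij) u v,
      pathPot_apply_left hij, pathPot_apply_right hij, sub_zero]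
  have hcross : ∀ i j : Fin n, i < j →
      (∑ u : V i, ∑ v : V j,
          resistance (composite V G l (SimpleGraph.pathGraph n)) ⟨i, u⟩ ⟨j, v⟩)
        = (Fintype.card (V j) : ℝ) * rcentrality (G i) (l i)
          + (((j:ℕ) - (i:ℕ) : ℕ) : ℝ) * (Fintype.card (V i) : ℝ) * (Fintype.card (V j) : ℝ)
          + (Fintype.card (V i) : ℝ) * rcentrality (G j) (l j) := by
    intro i j hij
    have hBj : ∑ v : V j, resistance (G j) (l j) v = rcentrality (G j) (l j) := by
      rw [← sum_resistance_eq_rcentrality]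
      apply Finset.sum_congr rfl; intro v _
      rw [resistance_comm]
    have hAi : ∑ u : V i, resistance (G i) u (l i) = rcentrality (G i) (l i) :=
      sum_resistance_eq_rcentrality (G i) (l i)
    have hinner : ∀ u : V i, (∑ v : V j,
        resistance (composite V G l (SimpleGraph.pathGraph n)) ⟨i, u⟩ ⟨j, v⟩)
        = (Fintype.card (V j) : ℝ) * (resistance (G i) u (l i) + (((j:ℕ) - (i:ℕ) : ℕ) : ℝ))
          + rcentrality (G j) (l j) := by
      intro u
      have : ∀ v : V j, resistance (composite V G l (SimpleGraph.pathGraph n)) ⟨i, u⟩ ⟨j, v⟩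
          = (resistance (G i) u (l i) + (((j:ℕ) - (i:ℕ) : ℕ) : ℝ)) + resistance (G j) (l j) v := by
        intro v; rw [hcrossr i j hij u v]
      rw [Finset.sum_congr rfl (fun v _ => this v), Finset.sum_add_distrib, hBj,
        Finset.sum_const, Finset.card_univ, nsmul_eq_mul]
    rw [Finset.sum_congr rfl (fun u _ => hinner u), Finset.sum_add_distrib,
      Finset.sum_const, Finset.card_univ, nsmul_eq_mul, ← Finset.mul_sum,
      Finset.sum_add_distrib, hAi, Finset.sum_const, Finset.card_univ, nsmul_eq_mul]
    ring
  -- symmetry of cross blocks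
  have hsymmS : ∀ i j : Fin n,
      (∑ u : V j, ∑ v : V i,
          resistance (composite V G l (SimpleGraph.pathGraph n)) ⟨j, u⟩ ⟨i, v⟩)
        = (∑ u : V i, ∑ v : V j,
          resistance (composite V G l (SimpleGraph.pathGraph n)) ⟨i, u⟩ ⟨j, v⟩) := by
    intro i j
    rw [Finset.sum_comm]
    apply Finset.sum_congr rfl; intro u _
    apply Finset.sum_congr rfl; intro v _
    rw [resistance_comm]
  -- total sum rearrangement
  have hT : (∑ p : Σ i, V i, ∑ q : Σ i, V i,
        resistance (composite V G l (SimpleGraph.pathGraph n)) p q)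
      = ∑ i, ∑ j, (∑ u : V i, ∑ v : V j,
          resistance (composite V G l (SimpleGraph.pathGraph n)) ⟨i, u⟩ ⟨j, v⟩) := by
    rw [sum_sigma_univ (fun p => ∑ q, resistance (composite V G l (SimpleGraph.pathGraph n)) p q)]
    apply Finset.sum_congr rfl
    intro i _
    rw [Finset.sum_congr rfl (fun u _ => sum_sigma_univ
      (fun q => resistance (composite V G l (SimpleGraph.pathGraph n)) ⟨i, u⟩ q))]
    exact Finset.sum_comm
  -- split the double index sum into diagonal, upper and lower parts
  have e1 : ∀ i : Fin n, (∑ j, (∑ u : V i, ∑ v : V j,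
        resistance (composite V G l (SimpleGraph.pathGraph n)) ⟨i, u⟩ ⟨j, v⟩))
      = (∑ j ∈ Finset.Iio i, ∑ u : V i, ∑ v : V j,
          resistance (composite V G l (SimpleGraph.pathGraph n)) ⟨i, u⟩ ⟨j, v⟩)
        + (∑ u : V i, ∑ v : V i,
          resistance (composite V G l (SimpleGraph.pathGraph n)) ⟨i, u⟩ ⟨i, v⟩)
        + (∑ j ∈ Finset.Ioi i, ∑ u : V i, ∑ v : V j,
          resistance (composite V G l (SimpleGraph.pathGraph n)) ⟨i, u⟩ ⟨j, v⟩) :=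
    fun i => fin_sum_split i _
  have e2 : (∑ i, ∑ j ∈ Finset.Iio i, ∑ u : V i, ∑ v : V j,
        resistance (composite V G l (SimpleGraph.pathGraph n)) ⟨i, u⟩ ⟨j, v⟩)
      = ∑ i, ∑ j ∈ Finset.Ioi i, ∑ u : V i, ∑ v : V j,
        resistance (composite V G l (SimpleGraph.pathGraph n)) ⟨i, u⟩ ⟨j, v⟩ := by
    rw [fin_sum_Iio_comm]
    apply Finset.sum_congr rfl; intro i _
    apply Finset.sum_congr rfl; intro j _
    exact hsymmS i j
  have e4 : (∑ i, ∑ j ∈ Finset.Ioi i, ∑ u : V i, ∑ v : V j,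
        resistance (composite V G l (SimpleGraph.pathGraph n)) ⟨i, u⟩ ⟨j, v⟩)
      = ∑ i, ∑ j ∈ Finset.Ioi i,
          ((Fintype.card (V j) : ℝ) * rcentrality (G i) (l i)
          + (((j:ℕ) - (i:ℕ) : ℕ) : ℝ) * (Fintype.card (V i) : ℝ) * (Fintype.card (V j) : ℝ)
          + (Fintype.card (V i) : ℝ) * rcentrality (G j) (l j)) := by
    apply Finset.sum_congr rfl; intro i _
    apply Finset.sum_congr rfl; intro j hj
    exact hcross i j (Finset.mem_Ioi.1 hj)
  -- the pairing identity
  have hP3 : (∑ i, ∑ j ∈ Finset.Ioi i, (Fintype.card (V i) : ℝ) * rcentrality (G j) (l j))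
      = ∑ i, ∑ j ∈ Finset.Iio i, (Fintype.card (V j) : ℝ) * rcentrality (G i) (l i) :=
    (fin_sum_Iio_comm (fun i j => (Fintype.card (V j) : ℝ) * rcentrality (G i) (l i))).symm
  have hNi : ∀ i : Fin n, (∑ j ∈ Finset.Iio i, (Fintype.card (V j) : ℝ))
      + (∑ j ∈ Finset.Ioi i, (Fintype.card (V j) : ℝ))
      = (Fintype.card (Σ i, V i) : ℝ) - (Fintype.card (V i) : ℝ) := by
    intro i
    have h := fin_sum_split i (fun j => (Fintype.card (V j) : ℝ))
    rw [← hNsum] at h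
    linarith
  have hP : (∑ i, ∑ j ∈ Finset.Ioi i, (Fintype.card (V j) : ℝ) * rcentrality (G i) (l i))
      + (∑ i, ∑ j ∈ Finset.Ioi i, (Fintype.card (V i) : ℝ) * rcentrality (G j) (l j))
      = ∑ i, ((Fintype.card (Σ i, V i) : ℝ) - (Fintype.card (V i) : ℝ))
          * rcentrality (G i) (l i) := by
    rw [hP3, ← Finset.sum_add_distrib]
    apply Finset.sum_congr rfl; intro i _
    rw [← Finset.sum_mul, ← Finset.sum_mul, ← add_mul, add_comm
      (∑ j ∈ Finset.Ioi i, (Fintype.card (V j) : ℝ)), hNi i]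
  -- put everything together
  have hTval : (∑ p : Σ i, V i, ∑ q : Σ i, V i,
        resistance (composite V G l (SimpleGraph.pathGraph n)) p q)
      = 2 * (∑ i, 2 * (Fintype.card (V i) : ℝ) * coherence (G i))
        + 2 * ((∑ i : Fin n, ∑ j ∈ Finset.Ioi i, ((j.val - i.val : ℕ) : ℝ)
              * (Fintype.card (V i) : ℝ) * (Fintype.card (V j) : ℝ))
            + (∑ i, ((Fintype.card (Σ i, V i) : ℝ) - (Fintype.card (V i) : ℝ))
              * rcentrality (G i) (l i))) := by
    rw [hT, Finset.sum_congr rfl (fun i _ => e1 i), Finset.sum_add_distrib,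
      Finset.sum_add_distrib, e2, e4, Finset.sum_congr rfl (fun i _ => hdiag i)]
    simp only [Finset.sum_add_distrib]
    have hfold : (∑ i, 4 * (Fintype.card (V i) : ℝ) * coherence (G i))
        = 2 * ∑ i, 2 * (Fintype.card (V i) : ℝ) * coherence (G i) := by
      rw [Finset.mul_sum]
      apply Finset.sum_congr rfl
      intro i _
      ring
    rw [← hP, hfold]
    ring
  have heff : effRes (composite V G l (SimpleGraph.pathGraph n))
      = (∑ i, 2 * (Fintype.card (V i) : ℝ) * coherence (G i)) +
         ((∑ i : Fin n, ∑ j ∈ Finset.Ioi i,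
            ((j.val - i.val : ℕ) : ℝ) *
              (Fintype.card (V i) : ℝ) * (Fintype.card (V j) : ℝ)) +
         (∑ i, ((Fintype.card (Σ i, V i) : ℝ) - (Fintype.card (V i) : ℝ)) *
            rcentrality (G i) (l i))) := by
    rw [effRes, hTval]
    ring
  rw [coherence, heff, one_div_mul_eq_div]
  ring

end
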